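/- arXiv:0903.5375 — 5 statements merged into one kernel-verified Lean document; each statement's English description precedes it below -/
import Mathlib

section
/- Generalized Kapranov theorem: Let K be an algebraically closed field equipped with a surjective Krull valuation val : K → Γ ∪ {∞} onto a linearly ordered additive commutative group Γ. For every nonzero Laurent polynomial f in N variables over K, the tropical hypersurface of f equals the hypersurface associated to the tropicalization of f; that is, TV(f) = V(Tf). Explicitly: a point γ ∈ Γ^N satisfies γ = (val(x_1),…,val(x_N)) for some x ∈ (K∖{0})^N with f(x) = 0 if and only if the minimum min_{α ∈ E(f)} (val(φ_α) + α·γ) is attained for at least two distinct exponents α ∈ E(f). -/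
open Finset Pointwise

/-- The tropical dot product `α·γ = ∑ i, α i • γ i`. -/
noncomputable def tropDot {Γ : Type*} [AddCommGroup Γ] [LinearOrder Γ] [IsOrderedAddMonoid Γ] {N : ℕ}
    (α : Fin N → ℤ) (γ : Fin N → Γ) : Γ :=
  ∑ i, α i • γ i

/-- The tropicalization of a Laurent polynomial `f` (an element of the group algebra
`K[ℤ^N]`), evaluated at `γ ∈ Γ^N`:  `Tf(γ) = min_{α ∈ E(f)} (val φ_α + α·γ)`,
computed in `Γ ∪ {∞}` (the min over the empty set is `∞`). -/
noncomputable def tropicalize {Γ : Type*} [AddCommGroup Γ] [LinearOrder Γ] [IsOrderedAddMonoid Γ]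
    {K : Type*} [Field K] {N : ℕ} (val : K → WithTop Γ)
    (f : AddMonoidAlgebra K (Fin N → ℤ)) (γ : Fin N → Γ) : WithTop Γ :=
  f.coeff.support.inf fun α => val (f.coeff α) + WithTop.some (tropDot α γ)

/-- `D_γ(Tf)`: the set of exponents of `f` at which the minimum defining `Tf(γ)`
is attained. -/
def tropD {Γ : Type*} [AddCommGroup Γ] [LinearOrder Γ] [IsOrderedAddMonoid Γ] {K : Type*} [Field K] {N : ℕ}
    (val : K → WithTop Γ) (f : AddMonoidAlgebra K (Fin N → ℤ))
    (γ : Fin N → Γ) : Set (Fin N → ℤ) :=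
  {α | α ∈ f.coeff.support ∧ tropicalize val f γ = val (f.coeff α) + WithTop.some (tropDot α γ)}

/-- `V(Tf)`: the hypersurface associated to the tropicalization of `f`,
i.e. the points `γ` where the minimum is attained at least twice. -/
def tropV {Γ : Type*} [AddCommGroup Γ] [LinearOrder Γ] [IsOrderedAddMonoid Γ] {K : Type*} [Field K] {N : ℕ}
    (val : K → WithTop Γ) (f : AddMonoidAlgebra K (Fin N → ℤ)) :
    Set (Fin N → Γ) :=
  {γ | ∃ α β : Fin N → ℤ, α ≠ β ∧ α ∈ tropD val f γ ∧ β ∈ tropD val f γ}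

/-- Evaluation of a Laurent polynomial at a point of the torus `(K∖{0})^N`:
`f(x) = ∑_{α ∈ E(f)} φ_α x^α`. -/
noncomputable def lEval {K : Type*} [Field K] {N : ℕ}
    (f : AddMonoidAlgebra K (Fin N → ℤ)) (x : Fin N → Kˣ) : K :=
  ∑ α ∈ f.coeff.support, f.coeff α * ((∏ i, (x i) ^ (α i) : Kˣ) : K)

/-!
The inclusion `TV(f) ⊆ V(Tf)` is the ultrametric inequality: if the minimum defining `Tf(γ)` is
attained by a single term of `f`, that term dominates `f(x)`, which is therefore nonzero.

Conversely, let the minimum be attained at exponents `α ≠ β`, differing in the coordinate `i₀`, and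
split `f` into slices `f_n` according to the `i₀`-exponent. A generic point `c` with `val c = γ`
gives `val (f_n c) = T f_n (γ) = Tf(γ)` for the slices of `α` and `β`: after a Kronecker
substitution this is a one-variable statement, which follows by factoring into linear factors and
choosing a unit whose residue avoids those of the roots. Then `y ↦ f(c₁, …, c_{i₀} y, …, c_N)` has
coefficients `f_n(c)` whose minimal valuation `Tf(γ)` is attained twice, and such a polynomial has a
root of valuation `0`: otherwise every linear factor, hence the product, would have a unique
coefficient of minimal valuation.
-/

open Polynomial

theorem WithTop.LinearOrderedAddCommGroup.coe_zsmul {Γ : Type*} [AddCommGroup Γ] [LinearOrder Γ]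
    [IsOrderedAddMonoid Γ] (n : ℤ) (g : Γ) : ((n • g : Γ) : WithTop Γ) = n • (g : WithTop Γ) := by
  cases n with
  | ofNat k => simp [WithTop.coe_nsmul]
  | negSucc k => rw [negSucc_zsmul, negSucc_zsmul, coe_neg, WithTop.coe_nsmul]

theorem zpow_sum {G ι : Type*} [CommGroup G] (a : G) (s : Finset ι) (f : ι → ℤ) :
    a ^ (∑ i ∈ s, f i) = ∏ i ∈ s, a ^ f i := by
  classical
  induction s using Finset.induction_on with
  | empty => simp
  | insert i s hi ih => rw [Finset.sum_insert hi, Finset.prod_insert hi, zpow_add, ih]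

theorem exists_injOn_dotProduct {σ R : Type*} [Fintype σ] [CommRing R] [IsDomain R] [Infinite R]
    (S : Finset (σ → R)) : ∃ w : σ → R, Set.InjOn (· ⬝ᵥ w) S := by
  classical
  let L : (σ → R) → MvPolynomial σ R := fun a => ∑ j, MvPolynomial.C (a j) * MvPolynomial.X j
  have hL : ∀ a w, MvPolynomial.eval w (L a) = a ⬝ᵥ w := by simp [L, dotProduct]
  have hne : ∏ ab ∈ S.offDiag, L (ab.1 - ab.2) ≠ 0 := by
    rw [Finset.prod_ne_zero_iff]
    rintro ⟨a, b⟩ hab h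
    refine (Finset.mem_offDiag.1 hab).2.2 (funext fun j => sub_eq_zero.1 ?_)
    simpa [hL] using congrArg (MvPolynomial.eval (Pi.single j 1)) h
  obtain ⟨w, hw⟩ : ∃ w, MvPolynomial.eval w (∏ ab ∈ S.offDiag, L (ab.1 - ab.2)) ≠ 0 := by
    by_contra! h
    exact hne (MvPolynomial.funext fun w => by simpa using h w)
  refine ⟨w, fun a ha b hb hab => by_contra fun hab' => ?_⟩
  rw [map_prod, Finset.prod_ne_zero_iff] at hw
  exact hw (a, b) (Finset.mem_offDiag.2 ⟨ha, hb, hab'⟩)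
    (by rw [hL, sub_dotProduct]; exact sub_eq_zero.2 hab)

namespace AddValuation

theorem exists_coe_eq {Γ : Type*} [AddCommGroup Γ] [LinearOrder Γ] [IsOrderedAddMonoid Γ]
    {R : Type*} [Ring R] [Nontrivial R] (val : R → WithTop Γ)
    (h0 : ∀ x, val x = ⊤ ↔ x = 0) (hmul : ∀ x y, val (x * y) = val x + val y)
    (hadd : ∀ x y, min (val x) (val y) ≤ val (x + y)) :
    ∃ v : AddValuation R (WithTop Γ), ⇑v = val := by
  have h1 : val 1 = 0 := by
    have h := hmul 1 1
    rw [mul_one, ← add_zero (val 1), add_assoc, zero_add] at h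
    simpa using (WithTop.add_left_cancel (mt (h0 1).1 one_ne_zero) h).symm
  exact ⟨AddValuation.of val ((h0 0).2 rfl) h1 hadd hmul, rfl⟩

variable {Γ₀ : Type*} [LinearOrderedAddCommGroupWithTop Γ₀]

theorem map_sum_eq_of_lt {R : Type*} [Ring R] (v : AddValuation R Γ₀) {ι : Type*} [DecidableEq ι]
    {s : Finset ι} {f : ι → R} {j : ι} (hj : j ∈ s) (hf : ∀ i ∈ s \ {j}, v (f j) < v (f i)) :
    v (∑ i ∈ s, f i) = v (f j) :=
  Valuation.map_sum_eq_of_lt v hj hf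

theorem map_prod {R : Type*} [CommRing R] (v : AddValuation R Γ₀) {ι : Type*} (s : Finset ι)
    (f : ι → R) : v (∏ i ∈ s, f i) = ∑ i ∈ s, v (f i) :=
  _root_.map_prod v.toValuation f s

theorem map_multiset_prod {R : Type*} [CommRing R] (v : AddValuation R Γ₀) (s : Multiset R) :
    v s.prod = (s.map v).sum :=
  _root_.map_multiset_prod v.toValuation s

theorem map_zpow {K : Type*} [Field K] (v : AddValuation K Γ₀) (x : K) (n : ℤ) :
    v (x ^ n) = n • v x :=
  map_zpow₀ v.toValuation x n

theorem map_monomial {Γ : Type*} [AddCommGroup Γ] [LinearOrder Γ] [IsOrderedAddMonoid Γ]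
    {K : Type*} [Field K] (v : AddValuation K (WithTop Γ)) {N : ℕ} {x : Fin N → Kˣ}
    {γ : Fin N → Γ} (hx : ∀ i, v (x i) = γ i) (δ : Fin N → ℤ) :
    v ((∏ i, x i ^ δ i : Kˣ) : K) = tropDot δ γ := by
  simp [Units.coe_prod, v.map_prod, v.map_zpow, hx, tropDot, WithTop.coe_sum,
    WithTop.LinearOrderedAddCommGroup.coe_zsmul]

end AddValuation

namespace Polynomial

section CommRing

variable {Γ : Type*} [AddCommGroup Γ] [LinearOrder Γ] [IsOrderedAddMonoid Γ]
  {R : Type*} [CommRing R] (v : AddValuation R (WithTop Γ))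

def HasStrictMinCoeff (p : R[X]) : Prop :=
  ∃ k, v (p.coeff k) ≠ ⊤ ∧ ∀ j ≠ k, v (p.coeff k) < v (p.coeff j)

variable {v}

theorem le_val_coeff_mul {p q : R[X]} {a b : WithTop Γ} (hp : ∀ k, a ≤ v (p.coeff k))
    (hq : ∀ k, b ≤ v (q.coeff k)) (n : ℕ) : a + b ≤ v ((p * q).coeff n) := by
  rw [coeff_mul]
  exact v.map_le_sum fun x _ => v.map_mul _ _ ▸ add_le_add (hp x.1) (hq x.2)

theorem HasStrictMinCoeff.mul {p q : R[X]} (hp : HasStrictMinCoeff v p)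
    (hq : HasStrictMinCoeff v q) : HasStrictMinCoeff v (p * q) := by
  obtain ⟨k, hk, hpk⟩ := hp
  obtain ⟨l, hl, hql⟩ := hq
  have hle : ∀ j, v (q.coeff l) ≤ v (q.coeff j) := fun j => by
    rcases eq_or_ne j l with rfl | hj
    exacts [le_rfl, (hql j hj).le]
  have hlt : ∀ x : ℕ × ℕ, x ≠ (k, l) →
      v (p.coeff k) + v (q.coeff l) < v (p.coeff x.1 * q.coeff x.2) := by
    rintro ⟨i, j⟩ hij
    rw [v.map_mul]
    rcases eq_or_ne i k with rfl | hi
    · exact WithTop.add_lt_add_left hk (hql j fun hj => hij (by rw [hj]))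
    · exact WithTop.add_lt_add_of_lt_of_le hl (hpk i hi) (hle j)
  have hne : v (p.coeff k) + v (q.coeff l) ≠ ⊤ := WithTop.add_ne_top.2 ⟨hk, hl⟩
  have hkl : v ((p * q).coeff (k + l)) = v (p.coeff k) + v (q.coeff l) := by
    rw [coeff_mul, ← v.map_mul]
    refine v.map_sum_eq_of_lt (f := fun x => p.coeff x.1 * q.coeff x.2) (j := (k, l))
      (mem_antidiagonal.2 rfl) fun x hx => ?_
    rw [v.map_mul]
    exact hlt x fun h => (Finset.mem_sdiff.1 hx).2 (Finset.mem_singleton.2 h)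
  refine ⟨k + l, hkl ▸ hne, fun n hn => ?_⟩
  rw [hkl, coeff_mul]
  exact v.map_lt_sum hne fun x hx => hlt x fun h => hn (h ▸ (mem_antidiagonal.1 hx)).symm

theorem hasStrictMinCoeff_C {c : R} (hc : v c ≠ ⊤) : HasStrictMinCoeff v (C c) :=
  ⟨0, by simpa using hc, fun j hj => by simpa [coeff_C, hj] using hc.lt_top⟩

theorem hasStrictMinCoeff_X_sub_C {r : R} (hr : v r ≠ 0) : HasStrictMinCoeff v (X - C r) := by
  rcases hr.lt_or_gt with hr | hr
  · refine ⟨0, by simpa using hr.ne_top, fun j hj => ?_⟩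
    rcases j with _ | _ | j
    · exact absurd rfl hj
    · simpa using hr
    · simpa [coeff_X, coeff_C] using hr.trans_le le_top
  · refine ⟨1, by simp, fun j hj => ?_⟩
    rcases j with _ | _ | j
    · simpa using hr
    · exact absurd rfl hj
    · simp [coeff_X]

theorem hasStrictMinCoeff_multiset_prod {s : Multiset R[X]}
    (hs : ∀ p ∈ s, HasStrictMinCoeff v p) : HasStrictMinCoeff v s.prod :=
  Multiset.prod_induction (HasStrictMinCoeff v) s (fun _ _ => HasStrictMinCoeff.mul)
    (by simpa using hasStrictMinCoeff_C (v := v) (c := 1) (by simp)) hs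

theorem val_eval_le_coeff_mul {p q : R[X]} {y : R} (hp : ∀ k, v (p.eval y) ≤ v (p.coeff k))
    (hq : ∀ k, v (q.eval y) ≤ v (q.coeff k)) (n : ℕ) :
    v ((p * q).eval y) ≤ v ((p * q).coeff n) := by
  rw [eval_mul, v.map_mul]
  exact le_val_coeff_mul hp hq n

theorem val_eval_C_le_coeff (c y : R) (n : ℕ) : v ((C c).eval y) ≤ v ((C c).coeff n) := by
  rcases eq_or_ne n 0 with rfl | hn <;> simp [coeff_C, *]

theorem val_eval_X_sub_C_le_coeff {r y : R} (h : v (y - r) ≤ min 0 (v r)) (n : ℕ) :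
    v ((X - C r).eval y) ≤ v ((X - C r).coeff n) := by
  obtain ⟨h0, hr⟩ := le_min_iff.1 h
  rcases n with _ | _ | n <;> simp [coeff_X, coeff_C, *]

theorem val_sub_le_min {y r : R} (hy : v y = 0) (hr : v r = 0 → v (y - r) = 0) :
    v (y - r) ≤ min 0 (v r) := by
  rcases lt_trichotomy (v r) 0 with h | h | h
  · rw [v.map_sub_eq_of_lt_right (hy ▸ h), min_eq_right h.le]
  · simp [hr h, h]
  · rw [v.map_sub_eq_of_lt_left (hy ▸ h), hy, min_eq_left h.le]

end CommRing

section IsAlgClosed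

variable {Γ : Type*} [AddCommGroup Γ] [LinearOrder Γ] [IsOrderedAddMonoid Γ]
  {K : Type*} [Field K] [IsAlgClosed K] {v : AddValuation K (WithTop Γ)}

theorem hasStrictMinCoeff_of_forall_mem_roots {p : K[X]} (hp : p ≠ 0)
    (h : ∀ r ∈ p.roots, v r ≠ 0) : HasStrictMinCoeff v p := by
  rw [(IsAlgClosed.splits p).eq_prod_roots]
  refine (hasStrictMinCoeff_C (v.ne_top_iff.2 (leadingCoeff_ne_zero.2 hp))).mul
    (hasStrictMinCoeff_multiset_prod fun q hq => ?_)
  obtain ⟨r, hr, rfl⟩ := Multiset.mem_map.1 hq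
  exact hasStrictMinCoeff_X_sub_C (h r hr)

theorem exists_isRoot_val_eq_zero {p : K[X]} {k₁ k₂ : ℕ} (hk : k₁ ≠ k₂) (h0 : p.coeff k₁ ≠ 0)
    (h₁ : ∀ k, v (p.coeff k₁) ≤ v (p.coeff k)) (h₂ : ∀ k, v (p.coeff k₂) ≤ v (p.coeff k)) :
    ∃ y, v y = 0 ∧ p.IsRoot y := by
  have hp : p ≠ 0 := fun hp => h0 (by simp [hp])
  by_contra! h
  obtain ⟨k, -, hmin⟩ := hasStrictMinCoeff_of_forall_mem_roots (v := v) hp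
    fun r hr hr0 => h r hr0 ((mem_roots hp).1 hr)
  rcases eq_or_ne k₁ k with rfl | hk₁
  · exact (hmin k₂ hk.symm).not_ge (h₂ k₁)
  · exact (hmin k₁ hk₁).not_ge (h₁ k)

theorem val_eval_le_coeff {p : K[X]} {y : K} (hy : v y = 0)
    (hroots : ∀ r ∈ p.roots, v r = 0 → v (y - r) = 0) (n : ℕ) :
    v (p.eval y) ≤ v (p.coeff n) := by
  rw [(IsAlgClosed.splits p).eq_prod_roots]
  refine val_eval_le_coeff_mul (val_eval_C_le_coeff _ _)
    (Multiset.prod_induction (fun q : K[X] => ∀ k, v (q.eval y) ≤ v (q.coeff k)) _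
      (fun _ _ => val_eval_le_coeff_mul) (by simpa using val_eval_C_le_coeff (v := v) 1 y)
      fun q hq => ?_) n
  obtain ⟨r, hr, rfl⟩ := Multiset.mem_map.1 hq
  exact val_eval_X_sub_C_le_coeff (val_sub_le_min hy (hroots r hr))

-- `y` is a root of `X ∏ (X - r) - 1`: the valuations of `y` and of the `y - r` sum to `0`, and
-- none of them is negative.
theorem exists_val_eq_zero_forall_val_sub_eq_zero (s : Multiset K) (hs : ∀ r ∈ s, v r = 0) :
    ∃ y, v y = 0 ∧ ∀ r ∈ s, v (y - r) = 0 := by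
  set q : K[X] := X * (s.map fun r => X - C r).prod
  have hq : q.Monic := monic_X.mul (monic_multiset_prod_of_monic _ _ fun r _ => monic_X_sub_C r)
  have hdeg : (q - 1).degree ≠ 0 := by
    have hpos : 0 < q.degree := degree_pos_of_root (a := 0) hq.ne_zero (by simp [q])
    rw [degree_sub_eq_left_of_degree_lt (by rwa [degree_one])]
    exact hpos.ne'
  obtain ⟨y, hy⟩ := IsAlgClosed.exists_root (q - 1) hdeg
  have hsum : ((y ::ₘ s.map fun r => y - r).map v).sum = 0 := by
    rw [← v.map_multiset_prod, Multiset.prod_cons, ← v.map_one]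
    congr 1
    simpa [q, sub_eq_zero, eval_multiset_prod, Multiset.map_map] using hy
  have hy0 : 0 ≤ v y := by
    by_contra! hneg
    have hle : ∀ a ∈ s.map fun r => v (y - r), a ≤ 0 := by
      simp only [Multiset.mem_map]
      rintro _ ⟨r, hr, rfl⟩
      rw [v.map_sub_eq_of_lt_left (hs r hr ▸ hneg)]
      exact hneg.le
    rw [Multiset.map_cons, Multiset.sum_cons, Multiset.map_map, Function.comp_def] at hsum
    have := add_le_add_right ((Multiset.sum_le_card_nsmul _ 0 hle).trans_eq (nsmul_zero _)) (v y)
    rw [hsum, add_zero] at this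
    exact hneg.not_ge this
  have hnonneg : ∀ a ∈ (y ::ₘ s.map fun r => y - r).map v, 0 ≤ a := by
    simp only [Multiset.map_cons, Multiset.mem_cons, Multiset.map_map, Multiset.mem_map]
    rintro _ (rfl | ⟨r, hr, rfl⟩)
    · exact hy0
    · exact (le_min hy0 (hs r hr).ge).trans (v.map_sub y r)
  have hzero := Multiset.all_zero_of_le_zero_le_of_sum_eq_zero hnonneg hsum
  exact ⟨y, hzero _ (Multiset.mem_map_of_mem _ (Multiset.mem_cons_self _ _)), fun r hr =>
    hzero _ (Multiset.mem_map_of_mem _ (Multiset.mem_cons_of_mem (Multiset.mem_map_of_mem _ hr)))⟩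

theorem exists_val_eval_le_coeff {ι : Type*} (I : Finset ι) (p : ι → K[X]) :
    ∃ y, v y = 0 ∧ ∀ i ∈ I, ∀ n, v ((p i).eval y) ≤ v ((p i).coeff n) := by
  obtain ⟨y, hy, hys⟩ := exists_val_eq_zero_forall_val_sub_eq_zero
    ((∑ i ∈ I, (p i).roots).filter (v · = 0)) fun r hr => (Multiset.mem_filter.1 hr).2
  exact ⟨y, hy, fun i hi => val_eval_le_coeff hy fun r hr hr0 =>
    hys r (Multiset.mem_filter.2 ⟨Multiset.mem_sum.2 ⟨i, hi, hr⟩, hr0⟩)⟩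

end IsAlgClosed

end Polynomial

section LaurentPolynomial

variable {K : Type*} [Field K] {N : ℕ}

noncomputable def lTerm (f : AddMonoidAlgebra K (Fin N → ℤ)) (x : Fin N → Kˣ)
    (δ : Fin N → ℤ) : K :=
  f.coeff δ * ((∏ i, x i ^ δ i : Kˣ) : K)

-- `y ↦ y⁻ᵐ f(c₁ y^{w₁}, …, c_N y^{w_N})`, a polynomial as long as `m ≤ δ ⬝ᵥ w` on the support
noncomputable def substPoly (f : AddMonoidAlgebra K (Fin N → ℤ)) (c : Fin N → Kˣ)
    (w : Fin N → ℤ) (m : ℤ) : K[X] :=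
  ∑ δ ∈ f.coeff.support, C (lTerm f c δ) * X ^ (δ ⬝ᵥ w - m).toNat

variable {f : AddMonoidAlgebra K (Fin N → ℤ)} {c : Fin N → Kˣ} {w : Fin N → ℤ} {m : ℤ}

theorem lEval_mul_zpow (hm : ∀ δ ∈ f.coeff.support, m ≤ δ ⬝ᵥ w) (y : Kˣ) :
    lEval f (fun j => c j * y ^ w j) = (y ^ m : Kˣ) * (substPoly f c w m).eval (y : K) := by
  rw [substPoly, eval_finsetSum, Finset.mul_sum]
  refine Finset.sum_congr rfl fun δ hδ => ?_
  have hmon : (∏ j, (c j * y ^ w j) ^ δ j : Kˣ)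
      = (∏ j, c j ^ δ j) * (y ^ m * y ^ ((δ ⬝ᵥ w - m).toNat : ℤ)) := by
    rw [← zpow_add, Int.toNat_of_nonneg (sub_nonneg.2 (hm δ hδ)), add_sub_cancel, dotProduct,
      zpow_sum, ← Finset.prod_mul_distrib]
    refine Finset.prod_congr rfl fun j _ => ?_
    rw [mul_zpow, ← zpow_mul, mul_comm (w j)]
  simp only [hmon, lTerm, eval_mul, eval_C, eval_pow, eval_X, Units.val_mul, zpow_natCast,
    Units.val_pow_eq_pow_val]
  ring

theorem coeff_substPoly (hm : ∀ δ ∈ f.coeff.support, m ≤ δ ⬝ᵥ w) (n : ℕ) :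
    (substPoly f c w m).coeff n = ∑ δ ∈ f.coeff.support with δ ⬝ᵥ w = m + n, lTerm f c δ := by
  rw [substPoly, finsetSum_coeff, Finset.sum_filter]
  refine Finset.sum_congr rfl fun δ hδ => ?_
  have := hm δ hδ
  rw [coeff_C_mul_X_pow]
  exact if_congr (by omega) rfl rfl

theorem coeff_substPoly_of_injOn (hm : ∀ δ ∈ f.coeff.support, m ≤ δ ⬝ᵥ w)
    (hw : Set.InjOn (· ⬝ᵥ w) f.coeff.support) {δ : Fin N → ℤ} (hδ : δ ∈ f.coeff.support) :
    (substPoly f c w m).coeff (δ ⬝ᵥ w - m).toNat = lTerm f c δ := by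
  have := hm δ hδ
  rw [coeff_substPoly hm, ← Finset.sum_singleton (lTerm f c) δ]
  refine Finset.sum_congr (Finset.eq_singleton_iff_unique_mem.2 ⟨Finset.mem_filter.2 ⟨hδ, by omega⟩,
    fun δ' hδ' => hw (Finset.mem_filter.1 hδ').1 hδ ?_⟩) fun _ _ => rfl
  change δ' ⬝ᵥ w = δ ⬝ᵥ w
  rw [(Finset.mem_filter.1 hδ').2]
  omega

theorem lEval_ofCoeff_filter (q : (Fin N → ℤ) → Prop) [DecidablePred q] (x : Fin N → Kˣ) :
    lEval (.ofCoeff (f.coeff.filter q)) x = ∑ δ ∈ f.coeff.support with q δ, lTerm f x δ := by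
  rw [lEval, Finsupp.support_filter]
  exact Finset.sum_congr rfl fun δ hδ => by
    rw [Finsupp.filter_apply_pos _ _ (Finset.mem_filter.1 hδ).2, lTerm]

end LaurentPolynomial

section Tropical

variable {Γ : Type*} [AddCommGroup Γ] [LinearOrder Γ] [IsOrderedAddMonoid Γ]
  {K : Type*} [Field K] {v : AddValuation K (WithTop Γ)} {N : ℕ}

section

variable {f : AddMonoidAlgebra K (Fin N → ℤ)} {x : Fin N → Kˣ} {γ : Fin N → Γ}

theorem val_lTerm (hx : ∀ i, v (x i) = γ i) (δ : Fin N → ℤ) :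
    v (lTerm f x δ) = v (f.coeff δ) + tropDot δ γ := by
  rw [lTerm, v.map_mul, v.map_monomial hx]

theorem tropicalize_le {δ : Fin N → ℤ} (hδ : δ ∈ f.coeff.support) :
    tropicalize v f γ ≤ v (f.coeff δ) + tropDot δ γ :=
  Finset.inf_le hδ

theorem tropicalize_le_val_sum (hx : ∀ i, v (x i) = γ i) {T : Finset (Fin N → ℤ)}
    (hT : T ⊆ f.coeff.support) : tropicalize v f γ ≤ v (∑ δ ∈ T, lTerm f x δ) :=
  v.map_le_sum fun δ hδ => (val_lTerm hx δ).symm ▸ tropicalize_le (hT hδ)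

theorem tropicalize_le_val_lEval (hx : ∀ i, v (x i) = γ i) : tropicalize v f γ ≤ v (lEval f x) :=
  tropicalize_le_val_sum hx subset_rfl

theorem exists_mem_tropD (hf : f ≠ 0) (γ : Fin N → Γ) : ∃ α, α ∈ tropD v f γ := by
  obtain ⟨α, hα, hαmin⟩ := f.coeff.support.exists_mem_eq_inf
    (Finsupp.support_nonempty_iff.2 (mt AddMonoidAlgebra.coeff_eq_zero.1 hf))
    fun δ => v (f.coeff δ) + tropDot δ γ
  exact ⟨α, hα, hαmin⟩

theorem tropicalize_ne_top {α : Fin N → ℤ} (hα : α ∈ tropD v f γ) : tropicalize v f γ ≠ ⊤ := by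
  rw [hα.2]
  exact WithTop.add_ne_top.2 ⟨v.ne_top_iff.2 (Finsupp.mem_support_iff.1 hα.1), WithTop.coe_ne_top⟩

theorem mem_tropV_of_lEval_eq_zero (hf : f ≠ 0) (hx : ∀ i, v (x i) = γ i) (h0 : lEval f x = 0) :
    γ ∈ tropV v f := by
  obtain ⟨α, hα⟩ := exists_mem_tropD (v := v) hf γ
  by_contra hV
  have hlt : ∀ δ ∈ f.coeff.support \ {α}, v (lTerm f x α) < v (lTerm f x δ) := by
    intro δ hδ
    obtain ⟨hδ, hδα⟩ := Finset.mem_sdiff.1 hδ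
    rw [val_lTerm hx, val_lTerm hx, ← hα.2]
    exact (tropicalize_le hδ).lt_of_ne fun h =>
      hV ⟨α, δ, fun h' => hδα (Finset.mem_singleton.2 h'.symm), hα, hδ, h⟩
  have h : v (lEval f x) = v (lTerm f x α) := v.map_sum_eq_of_lt hα.1 hlt
  rw [h0, v.map_zero, val_lTerm hx, ← hα.2] at h
  exact tropicalize_ne_top hα h.symm

theorem tropicalize_ofCoeff_filter {q : (Fin N → ℤ) → Prop} [DecidablePred q] {α : Fin N → ℤ}
    (hα : α ∈ tropD v f γ) (hq : q α) :
    tropicalize v (.ofCoeff (f.coeff.filter q)) γ = tropicalize v f γ := by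
  refine le_antisymm ?_ (Finset.le_inf fun δ hδ => ?_)
  · rw [hα.2, ← Finsupp.filter_apply_pos q f.coeff hq]
    exact Finset.inf_le (by rw [Finsupp.support_filter]; exact Finset.mem_filter.2 ⟨hα.1, hq⟩)
  · rw [Finsupp.support_filter] at hδ
    obtain ⟨hδ, hqδ⟩ := Finset.mem_filter.1 hδ
    rw [Finsupp.filter_apply_pos q f.coeff hqδ]
    exact tropicalize_le hδ

end

variable [IsAlgClosed K]

theorem exists_val_lEval_eq_tropicalize (hv : ∀ g : Γ, ∃ a : K, v a = g) {ι : Type*}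
    (I : Finset ι) (f : ι → AddMonoidAlgebra K (Fin N → ℤ)) (γ : Fin N → Γ) :
    ∃ x : Fin N → Kˣ, (∀ j, v (x j) = γ j) ∧
      ∀ i ∈ I, v (lEval (f i) x) = tropicalize v (f i) γ := by
  choose a ha using fun j => hv (γ j)
  let t (j : Fin N) : Kˣ := Units.mk0 (a j) (v.ne_top_iff.1 (ha j ▸ WithTop.coe_ne_top))
  have ht (j : Fin N) : v (t j) = γ j := ha j
  set S := I.biUnion fun i => (f i).coeff.support
  obtain ⟨w, hw⟩ := exists_injOn_dotProduct S
  obtain ⟨m, hm⟩ := (S.image (· ⬝ᵥ w)).bddBelow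
  have hmi : ∀ i ∈ I, ∀ δ ∈ (f i).coeff.support, m ≤ δ ⬝ᵥ w := fun i hi δ hδ =>
    hm (Finset.mem_coe.2 (Finset.mem_image_of_mem _ (Finset.mem_biUnion.2 ⟨i, hi, hδ⟩)))
  obtain ⟨y, hy, hyI⟩ := exists_val_eval_le_coeff (v := v) I fun i => substPoly (f i) t w m
  set Y : Kˣ := Units.mk0 y (v.ne_top_iff.1 (by simp [hy]))
  have hY : v Y = 0 := hy
  have hx (j : Fin N) : v (t j * Y ^ w j : Kˣ) = γ j := by
    simp [v.map_mul, Units.val_zpow_eq_zpow_val, v.map_zpow, ht, hY]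
  refine ⟨fun j => t j * Y ^ w j, hx, fun i hi => ?_⟩
  refine le_antisymm ?_ (tropicalize_le_val_lEval hx)
  rcases eq_or_ne (f i) 0 with hf | hf
  · simp [hf, tropicalize]
  obtain ⟨δ, hδ⟩ := exists_mem_tropD (v := v) hf γ
  have hwi : Set.InjOn (· ⬝ᵥ w) (f i).coeff.support :=
    hw.mono fun δ hδ => Finset.mem_coe.2 (Finset.mem_biUnion.2 ⟨i, hi, hδ⟩)
  calc v (lEval (f i) fun j => t j * Y ^ w j)
      = v ((substPoly (f i) t w m).eval y) := by
        rw [lEval_mul_zpow (hmi i hi), v.map_mul, Units.val_zpow_eq_zpow_val, v.map_zpow, hY,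
          smul_zero, zero_add, Units.val_mk0]
    _ ≤ v ((substPoly (f i) t w m).coeff (δ ⬝ᵥ w - m).toNat) := hyI i hi _
    _ = tropicalize v (f i) γ := by
        rw [coeff_substPoly_of_injOn (hmi i hi) hwi hδ.1, val_lTerm ht, ← hδ.2]

theorem exists_lEval_eq_zero_of_mem_tropV (hv : ∀ g : Γ, ∃ a : K, v a = g)
    {f : AddMonoidAlgebra K (Fin N → ℤ)} {γ : Fin N → Γ} (hγ : γ ∈ tropV v f) :
    ∃ x : Fin N → Kˣ, lEval f x = 0 ∧ ∀ i, v (x i) = γ i := by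
  obtain ⟨α, β, hαβ, hα, hβ⟩ := hγ
  obtain ⟨i₀, hi₀⟩ := Function.ne_iff.1 hαβ
  let slice (n : ℤ) : AddMonoidAlgebra K (Fin N → ℤ) := .ofCoeff (f.coeff.filter (· i₀ = n))
  obtain ⟨c, hc, hcslice⟩ := exists_val_lEval_eq_tropicalize hv {α i₀, β i₀} slice γ
  let w : Fin N → ℤ := Pi.single i₀ 1
  have hw (δ : Fin N → ℤ) : δ ⬝ᵥ w = δ i₀ := by simp [w]
  obtain ⟨m, hm⟩ := (f.coeff.support.image (· i₀)).bddBelow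
  have hm' : ∀ δ ∈ f.coeff.support, m ≤ δ ⬝ᵥ w := fun δ hδ => by
    simpa [hw] using hm (Finset.mem_coe.2 (Finset.mem_image_of_mem _ hδ))
  set P := substPoly f c w m
  have hcoeff (n : ℕ) : P.coeff n = lEval (slice (m + n)) c := by
    simp [P, coeff_substPoly hm', slice, lEval_ofCoeff_filter, hw]
  have hge (n : ℕ) : tropicalize v f γ ≤ v (P.coeff n) := by
    rw [hcoeff, lEval_ofCoeff_filter]
    exact tropicalize_le_val_sum hc (Finset.filter_subset _ _)
  have hmin {δ} (hδ : δ ∈ tropD v f γ) (hδI : δ i₀ ∈ ({α i₀, β i₀} : Finset ℤ)) :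
      v (P.coeff (δ i₀ - m).toNat) = tropicalize v f γ := by
    have := hw δ ▸ hm' δ hδ.1
    rw [hcoeff, show m + ((δ i₀ - m).toNat : ℤ) = δ i₀ by omega, hcslice _ hδI]
    exact tropicalize_ofCoeff_filter hδ rfl
  have hα' := hmin hα (by simp)
  have hβ' := hmin hβ (by simp)
  obtain ⟨y, hy, hroot⟩ := exists_isRoot_val_eq_zero (p := P)
    (k₁ := (α i₀ - m).toNat) (k₂ := (β i₀ - m).toNat)
    (by have := hw α ▸ hm' α hα.1; have := hw β ▸ hm' β hβ.1; omega)
    (fun h => tropicalize_ne_top hα (by rw [← hα', h, v.map_zero]))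
    (fun k => hα'.trans_le (hge k)) (fun k => hβ'.trans_le (hge k))
  set Y : Kˣ := Units.mk0 y (v.ne_top_iff.1 (by simp [hy]))
  refine ⟨fun j => c j * Y ^ w j, ?_, fun j => ?_⟩
  · rw [lEval_mul_zpow hm', Units.val_mk0, hroot.eq_zero, mul_zero]
  · simp [v.map_mul, Units.val_zpow_eq_zpow_val, v.map_zpow, hc, Y, hy]

end Tropical

/-- Generalized Kapranov theorem: over an algebraically closed field with a surjective
Krull valuation, `TV(f) = V(Tf)`. -/
theorem kapranov_theorem {Γ : Type*} [AddCommGroup Γ] [LinearOrder Γ] [IsOrderedAddMonoid Γ]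
    {K : Type*} [Field K] [IsAlgClosed K] {N : ℕ}
    (val : K → WithTop Γ)
    (hval0 : ∀ x : K, val x = ⊤ ↔ x = 0)
    (hvalmul : ∀ x y : K, val (x * y) = val x + val y)
    (hvaladd : ∀ x y : K, min (val x) (val y) ≤ val (x + y))
    (hvalsurj : ∀ g : Γ, ∃ a : K, val a = WithTop.some g)
    (f : AddMonoidAlgebra K (Fin N → ℤ)) (hf : f ≠ 0) (γ : Fin N → Γ) :
    γ ∈ tropV val f ↔
      ∃ x : Fin N → Kˣ, lEval f x = 0 ∧ ∀ i, val (x i : K) = WithTop.some (γ i) := by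
  obtain ⟨v, rfl⟩ := AddValuation.exists_coe_eq val hval0 hvalmul hvaladd
  exact ⟨exists_lEval_eq_zero_of_mem_tropV hvalsurj, fun ⟨x, hx0, hx⟩ =>
    mem_tropV_of_lEval_eq_zero hf hx hx0⟩
end

section
/- For nonzero Laurent polynomials f, g in N variables over the valued field K and every γ ∈ Γ^N, the tropicalization of the product evaluated at γ equals the tropical product of the tropicalizations: T(fg)(γ) = Tf(γ) + Tg(γ). -/
/-!
`Tf(γ)` is the value at `f` of the Gauss (monomial) valuation of `K[ℤ^N]` with weights `γ`, so the
claim is that this valuation is multiplicative. The ultrametric inequality applied to the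
coefficients of `fg` gives `T(fg)(γ) ≥ Tf(γ) + Tg(γ)`. For equality, choose exponents `α₀`, `β₀`
at which `Tf(γ)` and `Tg(γ)` are attained such that `α₀ + β₀` is the sum of a unique pair of such
minimizing exponents; this is possible because `ℤ^N` has unique sums (via any translation-invariant
linear order). In the coefficient of `fg` at `α₀ + β₀` the term `φ_{α₀} ψ_{β₀}` then has strictly
smaller valuation than every other term, so it alone determines the valuation of the coefficient.
-/

open Finset Pointwise

open LinearOrderedAddCommGroupWithTop in
theorem AddValuation.le_map_sum_add {Γ₀ R ι : Type*} [LinearOrderedAddCommGroupWithTop Γ₀]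
    [Ring R] (v : AddValuation R Γ₀) {s : Finset ι} {F : ι → R} {c d : Γ₀}
    (h : ∀ i ∈ s, c ≤ v (F i) + d) : c ≤ v (∑ i ∈ s, F i) + d := by
  rcases eq_or_ne d ⊤ with rfl | hd
  · simp only [add_top, le_top]
  have hsum : c + -d ≤ v (∑ i ∈ s, F i) :=
    v.map_le_sum fun i hi =>
      add_neg_cancel_right_of_ne_top hd (v (F i)) ▸ add_le_add_left (h i hi) _
  calc c = c + -d + d := (neg_add_cancel_right_of_ne_top hd c).symm
    _ ≤ v (∑ i ∈ s, F i) + d := add_le_add_left hsum _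

theorem AddMonoidAlgebra.coeff_mul_eq_sum_filter {R M : Type*} [Semiring R] [Add M] [DecidableEq M]
    (f g : AddMonoidAlgebra R M) (x : M) :
    (f * g).coeff x = ∑ p ∈ f.coeff.support ×ˢ g.coeff.support with p.1 + p.2 = x,
      f.coeff p.1 * g.coeff p.2 := by
  rw [coeff_mul, Finsupp.sum, sum_filter, sum_product]
  rfl

namespace AddMonoidAlgebra

variable {Γ K M : Type*} [AddCommGroup Γ] [LinearOrder Γ] [IsOrderedAddMonoid Γ]
  [DivisionRing K] [AddMonoid M] (v : AddValuation K (WithTop Γ)) (w : M →+ Γ)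

noncomputable def gaussVal (f : AddMonoidAlgebra K M) : WithTop Γ :=
  f.coeff.support.inf fun a => v (f.coeff a) + w a

-- For `w = tropDotHom γ` this is the set `tropD val f γ`.
noncomputable def initialSupport (f : AddMonoidAlgebra K M) : Finset M :=
  {a ∈ f.coeff.support | v (f.coeff a) + w a = gaussVal v w f}

variable {v w} {f g : AddMonoidAlgebra K M} {a b : M}

theorem gaussVal_le (ha : a ∈ f.coeff.support) : gaussVal v w f ≤ v (f.coeff a) + w a :=
  inf_le ha

theorem mem_support_of_mem_initialSupport (ha : a ∈ initialSupport v w f) :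
    a ∈ f.coeff.support :=
  (mem_filter.mp ha).1

theorem initialSupport_nonempty (hf : f ≠ 0) : (initialSupport v w f).Nonempty := by
  obtain ⟨a, ha, hmin⟩ := exists_mem_eq_inf _
    (Finsupp.support_nonempty_iff.mpr (coeff_eq_zero.not.mpr hf)) fun a => v (f.coeff a) + w a
  exact ⟨a, mem_filter.mpr ⟨ha, hmin.symm⟩⟩

theorem gaussVal_ne_top (ha : a ∈ f.coeff.support) : gaussVal v w f ≠ ⊤ := by
  refine ne_top_of_le_ne_top (WithTop.add_ne_top.mpr ⟨?_, WithTop.coe_ne_top⟩) (gaussVal_le ha)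
  exact v.ne_top_iff.mpr (Finsupp.mem_support_iff.mp ha)

theorem gaussVal_lt_of_notMem_initialSupport (ha : a ∈ f.coeff.support)
    (ha' : a ∉ initialSupport v w f) : gaussVal v w f < v (f.coeff a) + w a :=
  (gaussVal_le ha).lt_of_ne fun h => ha' (mem_filter.mpr ⟨ha, h.symm⟩)

theorem val_mul_add_weight (a b : M) (x y : K) :
    v (x * y) + w (a + b) = (v x + w a) + (v y + w b) := by
  rw [v.map_mul, map_add, WithTop.coe_add, add_add_add_comm]

theorem gaussVal_add_le_val_mul (ha : a ∈ f.coeff.support) (hb : b ∈ g.coeff.support) :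
    gaussVal v w f + gaussVal v w g ≤ v (f.coeff a * g.coeff b) + w (a + b) := by
  rw [val_mul_add_weight]
  exact add_le_add (gaussVal_le ha) (gaussVal_le hb)

theorem gaussVal_add_eq_val_mul (ha : a ∈ initialSupport v w f)
    (hb : b ∈ initialSupport v w g) :
    gaussVal v w f + gaussVal v w g = v (f.coeff a * g.coeff b) + w (a + b) := by
  rw [val_mul_add_weight, (mem_filter.mp ha).2, (mem_filter.mp hb).2]

theorem gaussVal_add_lt_val_mul (ha : a ∈ f.coeff.support) (hb : b ∈ g.coeff.support)
    (hab : ¬(a ∈ initialSupport v w f ∧ b ∈ initialSupport v w g)) :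
    gaussVal v w f + gaussVal v w g < v (f.coeff a * g.coeff b) + w (a + b) := by
  rw [val_mul_add_weight]
  by_cases ha' : a ∈ initialSupport v w f
  · exact WithTop.add_lt_add_of_le_of_lt (gaussVal_ne_top ha) (gaussVal_le ha)
      (gaussVal_lt_of_notMem_initialSupport hb fun hb' => hab ⟨ha', hb'⟩)
  · exact WithTop.add_lt_add_of_lt_of_le (gaussVal_ne_top hb)
      (gaussVal_lt_of_notMem_initialSupport ha ha') (gaussVal_le hb)

theorem gaussVal_add_le_val_coeff_mul (x : M) :
    gaussVal v w f + gaussVal v w g ≤ v ((f * g).coeff x) + w x := by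
  classical
  rw [coeff_mul_eq_sum_filter]
  refine v.le_map_sum_add fun p hp => ?_
  obtain ⟨hpair, rfl⟩ := mem_filter.mp hp
  exact gaussVal_add_le_val_mul (mem_product.mp hpair).1 (mem_product.mp hpair).2

theorem val_coeff_mul_add_of_uniqueAdd (ha : a ∈ initialSupport v w f)
    (hb : b ∈ initialSupport v w g)
    (huniq : UniqueAdd (initialSupport v w f) (initialSupport v w g) a b) :
    v ((f * g).coeff (a + b)) + w (a + b) = gaussVal v w f + gaussVal v w g := by
  classical
  have ha₀ := mem_support_of_mem_initialSupport ha
  have hb₀ := mem_support_of_mem_initialSupport hb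
  have hab : (a, b) ∈ {p ∈ f.coeff.support ×ˢ g.coeff.support | p.1 + p.2 = a + b} :=
    mem_filter.mpr ⟨mem_product.mpr ⟨ha₀, hb₀⟩, rfl⟩
  rw [coeff_mul_eq_sum_filter, ← add_sum_erase _ _ hab, v.map_add_eq_of_lt_left,
    gaussVal_add_eq_val_mul ha hb]
  refine v.map_lt_sum ?_ fun p hp => ?_
  · exact v.ne_top_iff.mpr (mul_ne_zero (Finsupp.mem_support_iff.mp ha₀)
      (Finsupp.mem_support_iff.mp hb₀))
  obtain ⟨hne, hp⟩ := mem_erase.mp hp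
  obtain ⟨hpair, hsum⟩ := mem_filter.mp hp
  rw [← add_lt_add_iff_left_of_ne_top (WithTop.coe_ne_top (a := w (a + b))),
    ← gaussVal_add_eq_val_mul ha hb, ← hsum]
  exact gaussVal_add_lt_val_mul (mem_product.mp hpair).1 (mem_product.mp hpair).2
    fun ⟨h₁, h₂⟩ => hne (Prod.ext_iff.mpr (huniq h₁ h₂ hsum))

theorem gaussVal_mul [UniqueSums M] (hf : f ≠ 0) (hg : g ≠ 0) :
    gaussVal v w (f * g) = gaussVal v w f + gaussVal v w g := by
  obtain ⟨a, ha, b, hb, huniq⟩ := UniqueSums.uniqueAdd_of_nonempty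
    (initialSupport_nonempty (v := v) (w := w) hf) (initialSupport_nonempty (v := v) (w := w) hg)
  have hval := val_coeff_mul_add_of_uniqueAdd ha hb huniq
  have hne_top : gaussVal v w f + gaussVal v w g ≠ ⊤ := WithTop.add_ne_top.mpr
    ⟨gaussVal_ne_top (mem_support_of_mem_initialSupport ha),
      gaussVal_ne_top (mem_support_of_mem_initialSupport hb)⟩
  refine le_antisymm ?_ (Finset.le_inf fun x _ => gaussVal_add_le_val_coeff_mul x)
  refine hval ▸ gaussVal_le (Finsupp.mem_support_iff.mpr fun h0 => hne_top ?_)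
  rw [← hval, h0, v.map_zero, WithTop.top_add]

end AddMonoidAlgebra

noncomputable def tropDotHom {Γ : Type*} [AddCommGroup Γ] [LinearOrder Γ] [IsOrderedAddMonoid Γ]
    {N : ℕ} (γ : Fin N → Γ) : (Fin N → ℤ) →+ Γ :=
  AddMonoidHom.mk' (tropDot · γ) fun α β => by
    simp only [tropDot, Pi.add_apply, add_smul, sum_add_distrib]

/-- The tropicalization of a product evaluates to the tropical product (i.e. the sum)
of the tropicalizations of the factors: `T(fg)(γ) = Tf(γ) + Tg(γ)`. -/
theorem tropicalize_mul {Γ : Type*} [AddCommGroup Γ] [LinearOrder Γ] [IsOrderedAddMonoid Γ]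
    {K : Type*} [Field K] {N : ℕ}
    (val : K → WithTop Γ)
    (hval0 : ∀ x : K, val x = ⊤ ↔ x = 0)
    (hvalmul : ∀ x y : K, val (x * y) = val x + val y)
    (hvaladd : ∀ x y : K, min (val x) (val y) ≤ val (x + y))
    (f g : AddMonoidAlgebra K (Fin N → ℤ)) (hf : f ≠ 0) (hg : g ≠ 0)
    (γ : Fin N → Γ) :
    tropicalize val (f * g) γ = tropicalize val f γ + tropicalize val g γ := by
  have hval1 : val 1 = 0 := (add_right_inj_of_ne_top (mt (hval0 1).1 one_ne_zero)).1 <| by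
    rw [add_zero, ← hvalmul, one_mul]
  exact AddMonoidAlgebra.gaussVal_mul
    (v := AddValuation.of val ((hval0 0).2 rfl) hval1 hvaladd hvalmul) (w := tropDotHom γ) hf hg
end

section
/- For nonzero Laurent polynomials f, g in N variables over the valued field K and every γ ∈ Γ^N, every exponent at which the tropicalization of fg attains its minimum at γ is a sum of such exponents for f and for g: D_γ(T(fg)) ⊆ D_γ(Tf) + D_γ(Tg). -/
open Finset Pointwise

/-! ### Auxiliary material -/

noncomputable instance lexPiIntLO {N : ℕ} : LinearOrder (Lex (Fin N → ℤ)) :=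
  inferInstance

instance lexPiIntGroup {N : ℕ} : IsOrderedCancelAddMonoid (Lex (Fin N → ℤ)) :=
  inferInstance

section ValAux

variable {Γ : Type*} [AddCommGroup Γ] [LinearOrder Γ] [IsOrderedAddMonoid Γ] {K : Type*} [Field K]
variable {val : K → WithTop Γ}

lemma auxValOne (hval0 : ∀ x : K, val x = ⊤ ↔ x = 0)
    (hvalmul : ∀ x y : K, val (x * y) = val x + val y) : val (1 : K) = 0 := by
  have h1 : val (1 : K) ≠ ⊤ := fun h => one_ne_zero ((hval0 1).1 h)
  have h2 : val (1 : K) + val 1 = val 1 := by rw [← hvalmul, one_mul]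
  lift val (1 : K) to Γ using h1 with t ht
  have h3 : t + t = t := by exact_mod_cast h2
  have : t = 0 := by
    have h4 : t + t = t + 0 := by rw [add_zero, h3]
    exact add_left_cancel h4
  exact_mod_cast congrArg (WithTop.some) this

lemma auxValNeg (hval0 : ∀ x : K, val x = ⊤ ↔ x = 0)
    (hvalmul : ∀ x y : K, val (x * y) = val x + val y) (x : K) : val (-x) = val x := by
  have hm : val (-1 : K) = 0 := by
    have h2 : val (-1 : K) + val (-1 : K) = 0 := by
      rw [← hvalmul, neg_mul_neg, one_mul]
      exact auxValOne hval0 hvalmul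
    have h1 : val (-1 : K) ≠ ⊤ := by
      intro h
      rw [h] at h2
      simp at h2
    lift val (-1 : K) to Γ using h1 with t ht
    have h3 : t + t = 0 := by exact_mod_cast h2
    have : t = 0 := by
      rcases lt_trichotomy t 0 with h | h | h
      · have h4 := add_lt_add h h
        rw [add_zero, h3] at h4
        exact absurd h4 (lt_irrefl 0)
      · exact h
      · have h4 := add_lt_add h h
        rw [zero_add, h3] at h4
        exact absurd h4 (lt_irrefl 0)
    exact_mod_cast congrArg (WithTop.some) this
  rw [← neg_one_mul, hvalmul, hm, zero_add]

lemma auxValAddEqLeft (hval0 : ∀ x : K, val x = ⊤ ↔ x = 0)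
    (hvalmul : ∀ x y : K, val (x * y) = val x + val y)
    (hvaladd : ∀ x y : K, min (val x) (val y) ≤ val (x + y))
    {a b : K} (h : val a < val b) : val (a + b) = val a := by
  refine le_antisymm ?_ (le_trans (le_of_eq (min_eq_left h.le).symm) (hvaladd a b))
  have h2 : min (val (a + b)) (val b) ≤ val a := by
    have h3 := hvaladd (a + b) (-b)
    rwa [add_neg_cancel_right, auxValNeg hval0 hvalmul] at h3
  by_contra hlt
  push_neg at hlt
  exact absurd (lt_min hlt h) (not_lt.2 h2)

lemma auxValSumLe (hval0 : ∀ x : K, val x = ⊤ ↔ x = 0)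
    (hvaladd : ∀ x y : K, min (val x) (val y) ≤ val (x + y))
    {ι : Type*} (s : Finset ι) (h : ι → K) (c : WithTop Γ) :
    (∀ i ∈ s, c ≤ val (h i)) → c ≤ val (∑ i ∈ s, h i) := by
  classical
  induction s using Finset.induction_on with
  | empty => intro _; simp [(hval0 0).2 rfl]
  | insert _ _ hx ih =>
    intro hc
    rw [Finset.sum_insert hx]
    exact le_trans
      (le_min (hc _ (Finset.mem_insert_self _ _))
        (ih fun i hi => hc i (Finset.mem_insert_of_mem hi)))
      (hvaladd _ _)

lemma auxValSumLt (hval0 : ∀ x : K, val x = ⊤ ↔ x = 0)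
    (hvaladd : ∀ x y : K, min (val x) (val y) ≤ val (x + y))
    {ι : Type*} (s : Finset ι) (h : ι → K) (c : WithTop Γ) (hctop : c ≠ ⊤) :
    (∀ i ∈ s, c < val (h i)) → c < val (∑ i ∈ s, h i) := by
  classical
  induction s using Finset.induction_on with
  | empty => intro _; simpa [(hval0 0).2 rfl] using lt_top_iff_ne_top.2 hctop
  | insert _ _ hx ih =>
    intro hc
    rw [Finset.sum_insert hx]
    exact lt_of_lt_of_le
      (lt_min (hc _ (Finset.mem_insert_self _ _))
        (ih fun i hi => hc i (Finset.mem_insert_of_mem hi)))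
      (hvaladd _ _)

end ValAux

lemma auxTropDotAdd {Γ : Type*} [AddCommGroup Γ] [LinearOrder Γ] [IsOrderedAddMonoid Γ] {N : ℕ}
    (a b : Fin N → ℤ) (γ : Fin N → Γ) :
    tropDot (a + b) γ = tropDot a γ + tropDot b γ := by
  simp [tropDot, add_smul, Finset.sum_add_distrib]


/-- `D_γ(T(fg)) ⊆ D_γ(Tf) + D_γ(Tg)` (Minkowski sum). -/
theorem tropD_mul_subset {Γ : Type*} [AddCommGroup Γ] [LinearOrder Γ] [IsOrderedAddMonoid Γ]
    {K : Type*} [Field K] {N : ℕ}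
    (val : K → WithTop Γ)
    (hval0 : ∀ x : K, val x = ⊤ ↔ x = 0)
    (hvalmul : ∀ x y : K, val (x * y) = val x + val y)
    (hvaladd : ∀ x y : K, min (val x) (val y) ≤ val (x + y))
    (f g : AddMonoidAlgebra K (Fin N → ℤ)) (hf : f ≠ 0) (hg : g ≠ 0)
    (γ : Fin N → Γ) :
    tropD val (f * g) γ ⊆ tropD val f γ + tropD val g γ := by
  classical
  intro α hα
  obtain ⟨hαs, hαeq⟩ := hα
  set Tf := tropicalize val f γ with hTfdef
  set Tg := tropicalize val g γ with hTgdef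
  have hnetop : ∀ (h : AddMonoidAlgebra K (Fin N → ℤ)) (a : Fin N → ℤ),
      a ∈ h.coeff.support → val (h.coeff a) ≠ ⊤ := by
    intro h a ha ht
    exact Finsupp.mem_support_iff.1 ha ((hval0 _).1 ht)
  have hfs : f.coeff.support.Nonempty := Finsupp.support_nonempty_iff.2 (mt AddMonoidAlgebra.coeff_eq_zero.1 hf)
  have hgs : g.coeff.support.Nonempty := Finsupp.support_nonempty_iff.2 (mt AddMonoidAlgebra.coeff_eq_zero.1 hg)
  have hTf_le : ∀ a ∈ f.coeff.support, Tf ≤ val (f.coeff a) + WithTop.some (tropDot a γ) :=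
    fun a ha => Finset.inf_le ha
  have hTg_le : ∀ a ∈ g.coeff.support, Tg ≤ val (g.coeff a) + WithTop.some (tropDot a γ) :=
    fun a ha => Finset.inf_le ha
  set Df : Finset (Fin N → ℤ) :=
    f.coeff.support.filter (fun a => Tf = val (f.coeff a) + WithTop.some (tropDot a γ)) with hDfdef
  set Dg : Finset (Fin N → ℤ) :=
    g.coeff.support.filter (fun a => Tg = val (g.coeff a) + WithTop.some (tropDot a γ)) with hDgdef
  have hDfne : Df.Nonempty := by
    obtain ⟨a, ha, h⟩ := Finset.exists_mem_eq_inf f.coeff.support hfs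
      (fun a => val (f.coeff a) + WithTop.some (tropDot a γ))
    exact ⟨a, Finset.mem_filter.2 ⟨ha, h⟩⟩
  have hDgne : Dg.Nonempty := by
    obtain ⟨a, ha, h⟩ := Finset.exists_mem_eq_inf g.coeff.support hgs
      (fun a => val (g.coeff a) + WithTop.some (tropDot a γ))
    exact ⟨a, Finset.mem_filter.2 ⟨ha, h⟩⟩
  -- lexicographic minima of Df and Dg
  obtain ⟨β, hβDf, hβeq⟩ := Finset.mem_image.1 ((Df.image (@toLex (Fin N → ℤ))).min'_mem (hDfne.image _))
  have hβmin : ∀ a ∈ Df, toLex β ≤ toLex a := by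
    intro a ha
    rw [hβeq]
    exact (Df.image (@toLex (Fin N → ℤ))).min'_le _ (Finset.mem_image_of_mem _ ha)
  obtain ⟨δ, hδDg, hδeq⟩ := Finset.mem_image.1 ((Dg.image (@toLex (Fin N → ℤ))).min'_mem (hDgne.image _))
  have hδmin : ∀ a ∈ Dg, toLex δ ≤ toLex a := by
    intro a ha
    rw [hδeq]
    exact (Dg.image (@toLex (Fin N → ℤ))).min'_le _ (Finset.mem_image_of_mem _ ha)
  have hβsupp : β ∈ f.coeff.support := (Finset.mem_filter.1 hβDf).1
  have hβval : Tf = val (f.coeff β) + WithTop.some (tropDot β γ) := (Finset.mem_filter.1 hβDf).2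
  have hδsupp : δ ∈ g.coeff.support := (Finset.mem_filter.1 hδDg).1
  have hδval : Tg = val (g.coeff δ) + WithTop.some (tropDot δ γ) := (Finset.mem_filter.1 hδDg).2
  have hTf_ne : Tf ≠ ⊤ := by
    rw [hβval]
    exact WithTop.add_ne_top.2 ⟨hnetop f β hβsupp, WithTop.coe_ne_top⟩
  have hTg_ne : Tg ≠ ⊤ := by
    rw [hδval]
    exact WithTop.add_ne_top.2 ⟨hnetop g δ hδsupp, WithTop.coe_ne_top⟩
  have hTfTg_ne : Tf + Tg ≠ ⊤ := WithTop.add_ne_top.2 ⟨hTf_ne, hTg_ne⟩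
  -- product coefficient formula
  have hcoef : ∀ x : Fin N → ℤ, (f * g).coeff x =
      ∑ p ∈ f.coeff.support ×ˢ g.coeff.support, (if p.1 + p.2 = x then f.coeff p.1 * g.coeff p.2 else 0) := by
    intro x
    rw [AddMonoidAlgebra.coeff_mul, Finsupp.sum, Finset.sum_product]
    exact Finset.sum_congr rfl fun a _ => by rw [Finsupp.sum]
  have hregroup : ∀ p : (Fin N → ℤ) × (Fin N → ℤ),
      (val (f.coeff p.1) + WithTop.some (tropDot p.1 γ))
        + (val (g.coeff p.2) + WithTop.some (tropDot p.2 γ))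
      = val (f.coeff p.1 * g.coeff p.2) + WithTop.some (tropDot (p.1 + p.2) γ) := by
    intro p
    rw [hvalmul, auxTropDotAdd, add_add_add_comm, ← WithTop.coe_add]
  -- lower bounds for the terms of the coefficient sum
  have hterm : ∀ p : (Fin N → ℤ) × (Fin N → ℤ), p.1 ∈ f.coeff.support → p.2 ∈ g.coeff.support →
      Tf + Tg ≤ val (f.coeff p.1 * g.coeff p.2) + WithTop.some (tropDot (p.1 + p.2) γ) := by
    intro p h1 h2
    rw [← hregroup]
    exact add_le_add (hTf_le _ h1) (hTg_le _ h2)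
  have htermlt : ∀ p : (Fin N → ℤ) × (Fin N → ℤ), p.1 ∈ f.coeff.support → p.2 ∈ g.coeff.support →
      (p.1 ∉ Df ∨ p.2 ∉ Dg) →
      Tf + Tg < val (f.coeff p.1 * g.coeff p.2) + WithTop.some (tropDot (p.1 + p.2) γ) := by
    intro p h1 h2 hcase
    rw [← hregroup]
    rcases hcase with hc | hc
    · have hne' : Tf ≠ val (f.coeff p.1) + WithTop.some (tropDot p.1 γ) := by
        intro h; exact hc (Finset.mem_filter.2 ⟨h1, h⟩)
      have h1' : Tf < val (f.coeff p.1) + WithTop.some (tropDot p.1 γ) :=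
        lt_of_le_of_ne (hTf_le _ h1) hne'
      calc Tf + Tg < (val (f.coeff p.1) + WithTop.some (tropDot p.1 γ)) + Tg :=
            (WithTop.add_lt_add_iff_right hTg_ne).2 h1'
        _ ≤ _ := add_le_add_right (hTg_le _ h2) _
    · have hne' : Tg ≠ val (g.coeff p.2) + WithTop.some (tropDot p.2 γ) := by
        intro h; exact hc (Finset.mem_filter.2 ⟨h2, h⟩)
      have h2' : Tg < val (g.coeff p.2) + WithTop.some (tropDot p.2 γ) :=
        lt_of_le_of_ne (hTg_le _ h2) hne'
      calc Tf + Tg < Tf + (val (g.coeff p.2) + WithTop.some (tropDot p.2 γ)) :=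
            (WithTop.add_lt_add_iff_left hTf_ne).2 h2'
        _ ≤ _ := add_le_add_left (hTf_le _ h1) _
  by_contra hcon
  have hmemD : ∀ p : (Fin N → ℤ) × (Fin N → ℤ), p.1 ∈ Df → p.2 ∈ Dg → p.1 + p.2 ≠ α := by
    intro p h1 h2 he
    refine hcon (Set.mem_add.2 ⟨p.1, ?_, p.2, ?_, he⟩)
    · exact ⟨(Finset.mem_filter.1 h1).1, (Finset.mem_filter.1 h1).2⟩
    · exact ⟨(Finset.mem_filter.1 h2).1, (Finset.mem_filter.1 h2).2⟩
  -- Part 1 : Tf + Tg < T(fg)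
  obtain ⟨t, ht⟩ := WithTop.ne_top_iff_exists.1 hTfTg_ne
  set c : WithTop Γ := WithTop.some (t - tropDot α γ) with hcdef
  have hcadd : c + WithTop.some (tropDot α γ) = Tf + Tg := by
    rw [hcdef, ← WithTop.coe_add, sub_add_cancel, ht]
  have hC : ∀ p ∈ f.coeff.support ×ˢ g.coeff.support,
      c < val (if p.1 + p.2 = α then f.coeff p.1 * g.coeff p.2 else 0) := by
    intro p hp
    obtain ⟨hp1, hp2⟩ := Finset.mem_product.1 hp
    split_ifs with he
    · have hnotboth : p.1 ∉ Df ∨ p.2 ∉ Dg := by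
        by_contra hb
        push_neg at hb
        exact hmemD p hb.1 hb.2 he
      have hlt := htermlt p hp1 hp2 hnotboth
      rw [he, ← hcadd] at hlt
      exact (WithTop.add_lt_add_iff_right WithTop.coe_ne_top).1 hlt
    · rw [(hval0 0).2 rfl]
      exact lt_top_iff_ne_top.2 WithTop.coe_ne_top
  have hbig : c < val ((f * g).coeff α) := by
    rw [hcoef α]
    exact auxValSumLt hval0 hvaladd _ _ c WithTop.coe_ne_top hC
  have hlt1 : Tf + Tg < tropicalize val (f * g) γ := by
    rw [hαeq, ← hcadd]
    exact (WithTop.add_lt_add_iff_right WithTop.coe_ne_top).2 hbig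
  -- Part 2 : T(fg) ≤ Tf + Tg
  have hp0 : (β, δ) ∈ f.coeff.support ×ˢ g.coeff.support := Finset.mem_product.2 ⟨hβsupp, hδsupp⟩
  have hvfd : val (f.coeff β * g.coeff δ) + WithTop.some (tropDot (β + δ) γ) = Tf + Tg := by
    rw [← hregroup (β, δ), ← hβval, ← hδval]
  have hvfd_ne : val (f.coeff β * g.coeff δ) ≠ ⊤ := by
    rw [hvalmul]
    exact WithTop.add_ne_top.2 ⟨hnetop f β hβsupp, hnetop g δ hδsupp⟩
  have hsplit : (f * g).coeff (β + δ) = f.coeff β * g.coeff δ +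
      ∑ p ∈ (f.coeff.support ×ˢ g.coeff.support).erase (β, δ),
        (if p.1 + p.2 = β + δ then f.coeff p.1 * g.coeff p.2 else 0) := by
    rw [hcoef (β + δ), ← Finset.add_sum_erase _ _ hp0, if_pos rfl]
  have hrest : ∀ p ∈ (f.coeff.support ×ˢ g.coeff.support).erase (β, δ),
      val (f.coeff β * g.coeff δ) < val (if p.1 + p.2 = β + δ then f.coeff p.1 * g.coeff p.2 else 0) := by
    intro p hp
    have hpne := Finset.ne_of_mem_erase hp
    obtain ⟨hp1, hp2⟩ := Finset.mem_product.1 (Finset.mem_of_mem_erase hp)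
    split_ifs with he
    · have hnotboth : p.1 ∉ Df ∨ p.2 ∉ Dg := by
        by_contra hb
        push_neg at hb
        have h1 := hβmin p.1 hb.1
        have h2 := hδmin p.2 hb.2
        have hp1β : p.1 = β := by
          by_contra hne
          have hlt : toLex β < toLex p.1 :=
            lt_of_le_of_ne h1 (fun h => hne (toLex.injective h.symm))
          have hlt2 : toLex β + toLex δ < toLex p.1 + toLex δ := add_lt_add_left hlt _
          have hle2 : toLex p.1 + toLex δ ≤ toLex p.1 + toLex p.2 := add_le_add_right h2 _
          have hfin : toLex (β + δ) < toLex (p.1 + p.2) := lt_of_lt_of_le hlt2 hle2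
          rw [he] at hfin
          exact absurd hfin (lt_irrefl _)
        have hp2δ : p.2 = δ := by
          have := he
          rw [hp1β] at this
          exact add_left_cancel this
        exact hpne (Prod.ext hp1β hp2δ)
      have hlt := htermlt p hp1 hp2 hnotboth
      rw [he, ← hvfd] at hlt
      exact (WithTop.add_lt_add_iff_right WithTop.coe_ne_top).1 hlt
    · rw [(hval0 0).2 rfl]
      exact lt_top_iff_ne_top.2 hvfd_ne
  have hrestval : val ((f * g).coeff (β + δ)) = val (f.coeff β * g.coeff δ) := by
    rw [hsplit]
    exact auxValAddEqLeft hval0 hvalmul hvaladd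
      (auxValSumLt hval0 hvaladd _ _ _ hvfd_ne hrest)
  have hσsupp : β + δ ∈ (f * g).coeff.support := by
    rw [Finsupp.mem_support_iff]
    intro h0
    apply hvfd_ne
    rw [← hrestval, h0]
    exact (hval0 0).2 rfl
  have hub : tropicalize val (f * g) γ ≤ Tf + Tg := by
    refine le_trans (Finset.inf_le hσsupp) ?_
    rw [hrestval, hvfd]
  exact absurd (lt_of_lt_of_le hlt1 hub) (lt_irrefl _)
end

section
/- If K is an algebraically closed field with a Krull valuation val : K → Γ ∪ {∞}, then the residue field R_val = A_val / m_val of the valuation (where A_val = {a ∈ K : val(a) ≥ 0} is the valuation ring and m_val = {a ∈ K : val(a) > 0} is its maximal ideal) is algebraically closed. -/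
/-!
A valuation ring is integrally closed in its field. Lift a monic irreducible polynomial over the
residue field to a monic polynomial over `A` of the same degree; it has a root in the algebraically
closed field `K`, that root is integral over `A` and hence lies in `A`, and its residue is a root of
the original polynomial.
-/

open Polynomial

theorem AddValuation.isIntegrallyClosedIn {R Γ₀ : Type*} [CommRing R]
    [LinearOrderedAddCommGroupWithTop Γ₀] (v : AddValuation R Γ₀) {A : Subring R}
    (hA : ∀ a, a ∈ A ↔ 0 ≤ v a) : IsIntegrallyClosedIn A R := by
  have hint : v.toValuation.Integers A :=
    { hom_inj := Subtype.coe_injective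
      map_le_one := fun a => (hA a).mp a.2
      exists_of_le_one := fun r hr => ⟨⟨r, (hA r).mpr hr⟩, rfl⟩ }
  exact Subring.isIntegrallyClosedIn_iff.mpr fun x hx => (hA x).mpr (hint.mem_of_integral hx)

theorem IsIntegrallyClosedIn.isAlgClosed_quotient {R K : Type*} [CommRing R] [Field K]
    [IsAlgClosed K] [Algebra R K] [IsIntegrallyClosedIn R K] (m : Ideal R) [m.IsMaximal] :
    letI := Ideal.Quotient.field m
    IsAlgClosed (R ⧸ m) := by
  let := Ideal.Quotient.field m
  refine IsAlgClosed.of_exists_root _ fun p hmonic hirr => ?_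
  obtain ⟨q, rfl, hdeg, hqmonic⟩ := lifts_and_degree_eq_and_monic
    (lifts_iff_coeff_lifts _ |>.mpr fun n => Ideal.Quotient.mk_surjective (p.coeff n)) hmonic
  have hdegK : (q.map (algebraMap R K)).degree ≠ 0 := by
    rw [hqmonic.degree_map, hdeg]
    exact (degree_pos_of_irreducible hirr).ne'
  obtain ⟨x, hx⟩ := IsAlgClosed.exists_root _ hdegK
  obtain ⟨r, rfl⟩ := IsIntegrallyClosedIn.algebraMap_eq_of_integral
    ⟨q, hqmonic, by rwa [IsRoot, eval_map_algebraMap] at hx⟩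
  have hr : q.eval r = 0 := by
    apply IsIntegralClosure.algebraMap_injective R R K
    rwa [map_zero, ← eval₂_at_apply, ← eval_map, ← IsRoot]
  exact ⟨Ideal.Quotient.mk m r, by rw [eval_map, eval₂_at_apply, hr, map_zero]⟩

theorem residue_field_isAlgClosed_general {Γ : Type*} [AddCommGroup Γ] [LinearOrder Γ] [IsOrderedAddMonoid Γ]
    {K : Type*} [Field K] [IsAlgClosed K]
    (val : K → WithTop Γ)
    (hval0 : ∀ x : K, val x = ⊤ ↔ x = 0)
    (hvalmul : ∀ x y : K, val (x * y) = val x + val y)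
    (hvaladd : ∀ x y : K, min (val x) (val y) ≤ val (x + y))
    (A : Subring K) (hA : ∀ a : K, a ∈ A ↔ 0 ≤ val a)
    (m : Ideal A)
    (hmax : m.IsMaximal) :
    letI : Field (A ⧸ m) := Ideal.Quotient.field m
    IsAlgClosed (A ⧸ m) := by
  have hval1 : val 1 = 0 :=
    WithTop.add_left_cancel ((hval0 1).not.mpr one_ne_zero) (by rw [add_zero, ← hvalmul, one_mul])
  let v : AddValuation K (WithTop Γ) := .of val ((hval0 0).mpr rfl) hval1 hvaladd hvalmul
  have : IsIntegrallyClosedIn A K := v.isIntegrallyClosedIn hA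
  exact IsIntegrallyClosedIn.isAlgClosed_quotient (K := K) m

/-- If `K` is an algebraically closed field with a Krull valuation, then the residue
field `A_val / m_val` of the valuation ring is algebraically closed. -/
theorem residue_field_isAlgClosed {Γ : Type*} [AddCommGroup Γ] [LinearOrder Γ] [IsOrderedAddMonoid Γ]
    {K : Type*} [Field K] [IsAlgClosed K]
    (val : K → WithTop Γ)
    (hval0 : ∀ x : K, val x = ⊤ ↔ x = 0)
    (hvalmul : ∀ x y : K, val (x * y) = val x + val y)
    (hvaladd : ∀ x y : K, min (val x) (val y) ≤ val (x + y))
    (A : Subring K) (hA : ∀ a : K, a ∈ A ↔ 0 ≤ val a)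
    (m : Ideal A) (hm : ∀ a : A, a ∈ m ↔ 0 < val (a : K))
    (hmax : m.IsMaximal) :
    letI : Field (A ⧸ m) := Ideal.Quotient.field m
    IsAlgClosed (A ⧸ m) :=
  residue_field_isAlgClosed_general val hval0 hvalmul hvaladd A hA m hmax
end

section
/- Let K be an algebraically closed field with a Krull valuation val : K → Γ ∪ {∞}, and let f_1, …, f_k be finitely many Laurent polynomials in N variables with coefficients in the valuation ring A_val = {a ∈ K : val(a) ≥ 0}. If each f_i has at least one coefficient that is a unit of A_val (i.e. of value 0), then there exists an N-tuple u = (u_1,…,u_N) with val(u_j) = 0 for all j such that f_i(u) is a unit of A_val (i.e. val(f_i(u)) = 0) for every i ∈ {1,…,k}. -/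
open Finset Pointwise

/-!
Reduce modulo the maximal ideal of the valuation ring `A`. Since `K` is algebraically closed and
`A` is integrally closed, the residue field `κ` is algebraically closed, hence infinite. Each
reduction `f̄ᵢ` is nonzero, because `fᵢ` has a unit coefficient, so the Laurent polynomial
`∏ f̄ᵢ` does not vanish identically on the torus `(κˣ)ᴺ` (distinct monomials are linearly
independent characters). Lift a point `w` where `∏ f̄ᵢ(w) ≠ 0` to units `u` of `A`: every
`fᵢ(u)` has nonzero residue `f̄ᵢ(w)`, so it is a unit of `A`.
-/

open Polynomial in
theorem IsLocalRing.isAlgClosed_residueField {R K : Type*} [CommRing R] [IsDomain R]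
    [IsLocalRing R] [IsIntegrallyClosed R] [Field K] [Algebra R K] [IsFractionRing R K]
    [IsAlgClosed K] : IsAlgClosed (ResidueField R) := by
  refine IsAlgClosed.of_exists_root _ fun p hp hirr => ?_
  obtain ⟨P, hPp, hPdeg, hPmonic⟩ :=
    lifts_and_degree_eq_and_monic (map_surjective _ residue_surjective p) hp
  obtain ⟨x, hx⟩ := IsAlgClosed.exists_aeval_eq_zero_of_injective K
    (IsFractionRing.injective R K) P (by rw [hPdeg]; exact (degree_pos_of_irreducible hirr).ne')
  obtain ⟨y, rfl⟩ := IsIntegrallyClosed.isIntegral_iff.mp ⟨P, hPmonic, hx⟩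
  have hy : aeval y P = 0 := by
    apply IsFractionRing.injective R K
    rw [← aeval_algebraMap_apply, hx, map_zero]
  refine ⟨residue R y, ?_⟩
  rw [← hPp, eval_map, eval₂_hom, ← coe_aeval_eq_eval, hy, map_zero]

section TorusEval

variable {R S : Type*} [CommRing R] [CommRing S] {ι : Type*} [Fintype ι]

def torusMonomial (x : ι → Rˣ) : Multiplicative (ι → ℤ) →* Rˣ where
  toFun α := ∏ i, x i ^ α.toAdd i
  map_one' := by simp
  map_mul' α β := by simp [zpow_add, Finset.prod_mul_distrib]

noncomputable def torusEval (x : ι → Rˣ) : AddMonoidAlgebra R (ι → ℤ) →ₐ[R] R :=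
  AddMonoidAlgebra.lift R R (ι → ℤ) ((Units.coeHom R).comp (torusMonomial x))

theorem torusEval_apply (x : ι → Rˣ) (p : AddMonoidAlgebra R (ι → ℤ)) :
    torusEval x p = ∑ α ∈ p.coeff.support, p.coeff α * ((∏ i, x i ^ α i : Rˣ) : R) := by
  simp [torusEval, AddMonoidAlgebra.lift_apply, Finsupp.sum, torusMonomial]

theorem torusEval_single (x : ι → Rˣ) (α : ι → ℤ) (r : R) :
    torusEval x (AddMonoidAlgebra.single α r) = r * ((∏ i, x i ^ α i : Rˣ) : R) := by
  simp [torusEval, torusMonomial, AddMonoidAlgebra.lift_single]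

theorem map_torusEval (φ : R →+* S) (x : ι → Rˣ) (p : AddMonoidAlgebra R (ι → ℤ)) :
    φ (torusEval x p) =
      torusEval (fun i => Units.map φ (x i)) (AddMonoidAlgebra.mapRingHom _ φ p) := by
  induction p using AddMonoidAlgebra.induction with
  | zero => simp
  | single_add α r p _ _ ih =>
    simp only [map_add, ih, torusEval_single, AddMonoidAlgebra.mapRingHom_single, map_mul,
      ← map_zpow, ← map_prod, Units.coe_map, MonoidHom.coe_coe]

end TorusEval

section InfiniteField

variable {κ : Type*} [Field κ] [Infinite κ] {ι : Type*} [Fintype ι]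

theorem exists_units_zpow_ne_one {n : ℤ} (hn : n ≠ 0) : ∃ t : κˣ, t ^ n ≠ 1 := by
  classical
  obtain ⟨t, ht⟩ := Infinite.exists_notMem_finset
    (insert 0 (Polynomial.nthRoots n.natAbs (1 : κ)).toFinset)
  rw [Finset.mem_insert, Multiset.mem_toFinset, Polynomial.mem_nthRoots (Int.natAbs_pos.mpr hn),
    not_or] at ht
  refine ⟨Units.mk0 t ht.1, fun h => ht.2 ?_⟩
  rw [← pow_natAbs_eq_one] at h
  simpa using congrArg Units.val h

def torusChar (α : ι → ℤ) : (ι → κˣ) →* κ where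
  toFun w := ((∏ i, w i ^ α i : κˣ) : κ)
  map_one' := by simp
  map_mul' w w' := by simp [mul_zpow, Finset.prod_mul_distrib]

theorem torusChar_injective : Function.Injective (torusChar (κ := κ) (ι := ι)) := by
  classical
  intro α β hαβ
  by_contra hne
  obtain ⟨i, hi⟩ := Function.ne_iff.mp hne
  obtain ⟨t, ht⟩ := exists_units_zpow_ne_one (κ := κ) (sub_ne_zero.mpr hi)
  have torusChar_mulSingle (γ : ι → ℤ) :
      torusChar γ (Pi.mulSingle i t) = ((t ^ γ i : κˣ) : κ) := by
    simp only [torusChar, MonoidHom.coe_mk, OneHom.coe_mk]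
    rw [Fintype.prod_eq_single i fun j hj => by simp [Pi.mulSingle_eq_of_ne hj],
      Pi.mulSingle_eq_same]
  have h := DFunLike.congr_fun hαβ (Pi.mulSingle i t)
  rw [torusChar_mulSingle, torusChar_mulSingle, Units.val_inj] at h
  exact ht (by rw [zpow_sub, h, mul_inv_cancel])

theorem exists_torusEval_ne_zero {p : AddMonoidAlgebra κ (ι → ℤ)} (hp : p ≠ 0) :
    ∃ w : ι → κˣ, torusEval w p ≠ 0 := by
  by_contra! h
  have hli := (linearIndependent_monoidHom (ι → κˣ) κ).comp _ torusChar_injective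
  refine hp (AddMonoidAlgebra.coeff_eq_zero.mp (linearIndependent_iff.mp hli p.coeff ?_))
  ext w
  simpa [Finsupp.linearCombination_apply, Finsupp.sum, Finset.sum_apply, torusEval_apply,
    torusChar] using h w

end InfiniteField

theorem IsLocalRing.exists_units_forall_isUnit_torusEval {R : Type*} [CommRing R]
    [IsLocalRing R] [Infinite (ResidueField R)] {ι σ : Type*} [Fintype ι] [Fintype σ]
    (g : σ → AddMonoidAlgebra R (ι → ℤ)) (hg : ∀ i, ∃ α, IsUnit ((g i).coeff α)) :
    ∃ a : ι → Rˣ, ∀ i, IsUnit (torusEval a (g i)) := by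
  set gbar := fun i => AddMonoidAlgebra.mapRingHom _ (residue R) (g i)
  have hgbar (i : σ) : gbar i ≠ 0 := by
    obtain ⟨α, hα⟩ := hg i
    intro h
    have hres := congrArg (AddMonoidAlgebra.coeff · α) h
    simp only [gbar, AddMonoidAlgebra.coeff_mapRingHom] at hres
    exact (residue_ne_zero_iff_isUnit _).mpr hα hres
  have hprod : ∏ i, gbar i ≠ 0 := Finset.prod_ne_zero_iff.mpr fun i _ => hgbar i
  obtain ⟨w, hw⟩ := exists_torusEval_ne_zero hprod
  rw [map_prod, Finset.prod_ne_zero_iff] at hw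
  choose a ha using fun j =>
    surjective_units_map_of_local_ringHom (residue R) residue_surjective inferInstance (w j)
  refine ⟨a, fun i => (residue_ne_zero_iff_isUnit _).mp ?_⟩
  have hlift : (fun j => Units.map (residue R : R →* ResidueField R) (a j)) = w := funext ha
  rw [map_torusEval, hlift]
  exact hw i (Finset.mem_univ i)

namespace AddValuation

variable {K Γ₀ : Type*} [Field K] [LinearOrderedAddCommGroupWithTop Γ₀] (v : AddValuation K Γ₀)

def valuationSubring : ValuationSubring K := v.toValuation.valuationSubring

theorem mem_valuationSubring_iff {x : K} : x ∈ v.valuationSubring ↔ 0 ≤ v x := Iff.rfl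

theorem isUnit_valuationSubring_iff {a : v.valuationSubring} : IsUnit a ↔ v a = 0 :=
  (Valuation.valuationSubring.integers v.toValuation).isUnit_iff_valuation_eq_one

end AddValuation

theorem lEval_eq_torusEval {K : Type*} [Field K] {N : ℕ}
    (f : AddMonoidAlgebra K (Fin N → ℤ)) (x : Fin N → Kˣ) : lEval f x = torusEval x f :=
  (torusEval_apply x f).symm

/-- If each of finitely many Laurent polynomials with coefficients in the valuation
ring has at least one unit coefficient, then there is an `N`-tuple of units at which
every one of them evaluates to a unit. -/
theorem exists_unit_tuple_eval_unit {Γ : Type*} [AddCommGroup Γ] [LinearOrder Γ] [IsOrderedAddMonoid Γ]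
    {K : Type*} [Field K] [IsAlgClosed K] {N k : ℕ}
    (val : K → WithTop Γ)
    (hval0 : ∀ x : K, val x = ⊤ ↔ x = 0)
    (hvalmul : ∀ x y : K, val (x * y) = val x + val y)
    (hvaladd : ∀ x y : K, min (val x) (val y) ≤ val (x + y))
    (f : Fin k → AddMonoidAlgebra K (Fin N → ℤ))
    (hcoeff : ∀ i α, 0 ≤ val ((f i).coeff α))
    (hunit : ∀ i, ∃ α, val ((f i).coeff α) = 0) :
    ∃ u : Fin N → Kˣ, (∀ j, val (u j : K) = 0) ∧ ∀ i, val (lEval (f i) u) = 0 := by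
  have hval1 : val 1 = 0 := by
    obtain ⟨c, hc⟩ := WithTop.ne_top_iff_exists.mp fun h => one_ne_zero ((hval0 1).mp h)
    have h := hvalmul 1 1
    rw [one_mul, ← hc] at h
    rw [← hc, ← WithTop.coe_zero, WithTop.coe_inj]
    exact left_eq_add.mp (by exact_mod_cast h)
  let v : AddValuation K (WithTop Γ) :=
    AddValuation.of val ((hval0 0).mpr rfl) hval1 hvaladd hvalmul
  let A := v.valuationSubring
  have : IsAlgClosed (IsLocalRing.ResidueField A) := IsLocalRing.isAlgClosed_residueField (K := K)
  have hlift (i : Fin k) : ∃ g, AddMonoidAlgebra.mapRingHom _ (algebraMap A K) g = f i := by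
    rw [AddMonoidAlgebra.coe_mapRingHom, ← Set.mem_range, AddMonoidAlgebra.range_map]
    exact fun α => ⟨⟨_, v.mem_valuationSubring_iff.mpr (hcoeff i α)⟩, rfl⟩
  choose g hg using hlift
  have hgunit (i : Fin k) : ∃ α, IsUnit ((g i).coeff α) := by
    obtain ⟨α, hα⟩ := hunit i
    refine ⟨α, v.isUnit_valuationSubring_iff.mpr ?_⟩
    rwa [← hg i, AddMonoidAlgebra.coeff_mapRingHom] at hα
  obtain ⟨a, ha⟩ := IsLocalRing.exists_units_forall_isUnit_torusEval g hgunit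
  refine ⟨fun j => Units.map (algebraMap A K : A →* K) (a j),
    fun j => v.isUnit_valuationSubring_iff.mp (a j).isUnit, fun i => ?_⟩
  rw [lEval_eq_torusEval, ← hg i, ← map_torusEval]
  exact v.isUnit_valuationSubring_iff.mp (ha i)
end
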